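/- arXiv:1301.0087 — 2 statements merged into one kernel-verified Lean document; each statement's English description precedes it below -/
import Mathlib

section
/- Let X₁ have Gamma distribution with shape m₁ and rate α₁(s) = m₁ s / ω₁ in the variable s = 1/SNR, and X₂ with shape m₂ and rate α₂(s) = m₂ s / ω₂. Then as SNR → ∞, P(min(X₁,X₂) < γ_th) is asymptotically (1/(m Γ(m)))(m γ_th/ω)^m SNR^{−m}, where m = min(m₁,m₂), ω the corresponding ω-parameter, whenever m₁ ≠ m₂; if m₁ = m₂ = m the asymptotic constant is the sum of the two individual constants. -/
/-!
At rate `r = m / (ω * SNR)` a hop's outage probability is the Gamma CDF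
`r ^ m / Γ(m) * ∫₀^γ x ^ (m - 1) * exp (-r x) dx`, and by dominated convergence the integral tends
to `γ ^ m / m` as `r → 0`; hence `Fᵢ ≃ (1 / (mᵢ Γ(mᵢ))) (mᵢ γ / ωᵢ) ^ mᵢ * SNR ^ (-mᵢ)`.
By independence `P(min < γ) = F₁ + F₂ - F₁ F₂`, where `F₁ F₂` is negligible, so the outage
probability is asymptotic to the sum of the two hop asymptotes: for `m₁ ≠ m₂` the term with the
smaller exponent dominates, and for `m₁ = m₂` the two constants add.
-/

open MeasureTheory ProbabilityTheory Real Filter Set Asymptotics Topology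

namespace Asymptotics

theorem isLittleO_rpow_rpow_atTop_of_lt {a b : ℝ} (hab : a < b) :
    (fun x : ℝ => x ^ a) =o[atTop] fun x => x ^ b := by
  refine (isLittleO_iff_tendsto' ?_).mpr ?_
  · filter_upwards [eventually_gt_atTop 0] with x hx hxb
    exact absurd hxb (rpow_pos_of_pos hx b).ne'
  · refine (tendsto_rpow_neg_atTop (sub_pos.mpr hab)).congr' ?_
    filter_upwards [eventually_gt_atTop 0] with x hx
    rw [← rpow_sub hx, neg_sub]

theorem isEquivalent_const_mul_rpow_add_of_lt {C₁ C₂ p q : ℝ} (hC₁ : C₁ ≠ 0) (hpq : p < q) :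
    (fun S : ℝ => C₁ * S ^ (-p) + C₂ * S ^ (-q)) ~[atTop] fun S => C₁ * S ^ (-p) :=
  IsEquivalent.refl.add_isLittleO <|
    ((isLittleO_rpow_rpow_atTop_of_lt (neg_lt_neg hpq)).const_mul_left C₂).const_mul_right hC₁

theorem IsEquivalent.tendsto_div_const_mul_rpow {f : ℝ → ℝ} {C p : ℝ} (hC : C ≠ 0)
    (h : f ~[atTop] fun S => C * S ^ p) :
    Tendsto (fun S => f S / (C * S ^ p)) atTop (𝓝 1) :=
  (isEquivalent_iff_tendsto_one (by
    filter_upwards [eventually_gt_atTop 0] with S hS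
    exact mul_ne_zero hC (rpow_pos_of_pos hS p).ne')).mp h

theorem IsEquivalent.add_sub_mul {α : Type*} {l : Filter α} {u₁ u₂ v₁ v₂ : α → ℝ}
    (h₁ : u₁ ~[l] v₁) (h₂ : u₂ ~[l] v₂) (hv₁ : 0 ≤ᶠ[l] v₁) (hv₂ : 0 ≤ᶠ[l] v₂)
    (hu₂ : Tendsto u₂ l (𝓝 0)) :
    (fun x => u₁ x + u₂ x - u₁ x * u₂ x) ~[l] fun x => v₁ x + v₂ x := by
  have hv₁_isBigO : v₁ =O[l] fun x => v₁ x + v₂ x := by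
    refine IsBigO.of_bound' ?_
    filter_upwards [hv₁, hv₂] with x (h1 : 0 ≤ v₁ x) (h2 : 0 ≤ v₂ x)
    simp only [norm_of_nonneg h1, norm_of_nonneg (add_nonneg h1 h2)]
    linarith
  have hsum : (fun x => u₁ x + u₂ x) ~[l] fun x => v₁ x + v₂ x := by
    refine (h₁.isLittleO.add_add h₂.isLittleO).congr' (Eventually.of_forall fun x => ?_) ?_
    · simp only [Pi.sub_apply]
      ring
    · filter_upwards [hv₁, hv₂] with x (h1 : 0 ≤ v₁ x) (h2 : 0 ≤ v₂ x)
      simp only [norm_of_nonneg h1, norm_of_nonneg h2]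
  have hprod : (fun x => u₁ x * u₂ x) =o[l] v₁ := by
    simpa using h₁.isBigO.mul_isLittleO ((isLittleO_one_iff ℝ).mpr hu₂)
  exact hsum.sub_isLittleO (hprod.trans_isBigO hv₁_isBigO)

end Asymptotics

theorem tendsto_intervalIntegral_rpow_mul_exp_neg_mul {m γ : ℝ} (hm : 0 < m) (hγ : 0 ≤ γ) :
    Tendsto (fun r => ∫ x in 0..γ, x ^ (m - 1) * exp (-(r * x))) (𝓝[≥] 0)
      (𝓝 (γ ^ m / m)) := by
  have hlim : ∫ x in 0..γ, x ^ (m - 1) * exp (-(0 * x)) = γ ^ m / m := by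
    simp [integral_rpow (Or.inl (by linarith : -1 < m - 1)), zero_rpow hm.ne']
  rw [← hlim]
  refine intervalIntegral.tendsto_integral_filter_of_dominated_convergence (fun x => x ^ (m - 1))
    (Eventually.of_forall fun r => by fun_prop) ?_
    (intervalIntegral.intervalIntegrable_rpow' (by linarith)) ?_
  · filter_upwards [self_mem_nhdsWithin] with r (hr : 0 ≤ r)
    refine Eventually.of_forall fun x hx => ?_
    rw [uIoc_of_le hγ] at hx
    have hx0 : 0 ≤ x ^ (m - 1) := rpow_nonneg hx.1.le _
    rw [norm_mul, norm_of_nonneg hx0, norm_of_nonneg (exp_pos _).le]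
    exact mul_le_of_le_one_right hx0 (exp_le_one_iff.mpr (by nlinarith [hx.1]))
  · refine Eventually.of_forall fun x _ => tendsto_nhdsWithin_of_tendsto_nhds ?_
    exact (by fun_prop : Continuous fun r => x ^ (m - 1) * exp (-(r * x))).tendsto 0

theorem gammaMeasure_Iio_toReal {m r γ : ℝ} (hm : 0 < m) (hr : 0 < r) (hγ : 0 ≤ γ) :
    (gammaMeasure m r (Iio γ)).toReal =
      r ^ m / Gamma m * ∫ x in 0..γ, x ^ (m - 1) * exp (-(r * x)) := by
  have := isProbabilityMeasure_gammaMeasure hm hr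
  have : NullSingletonClass (gammaMeasure m r) := by unfold gammaMeasure; infer_instance
  rw [measure_congr Iio_ae_eq_Iic, ← measureReal_def, ← cdf_eq_real,
    cdf_gammaMeasure_eq_integral hm hr, ← intervalIntegral.integral_const_mul,
    intervalIntegral.integral_of_le hγ]
  refine (setIntegral_eq_of_subset_of_ae_sdiff_eq_zero nullMeasurableSet_Iic
    Ioc_subset_Iic_self ?_).trans (setIntegral_congr_fun measurableSet_Ioc fun x hx => ?_)
  · filter_upwards [compl_mem_ae_iff.mpr (measure_singleton (μ := volume) (0 : ℝ))]
      with x hx0 hx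
    have hx_neg : x < 0 := lt_of_le_of_ne (not_lt.mp fun h => hx.2 ⟨h, hx.1⟩) hx0
    simp [gammaPDFReal, hx_neg.not_ge]
  · simp [gammaPDFReal, hx.1.le, mul_assoc]

theorem gammaMeasure_Iio_toReal_isEquivalent {m ω γ : ℝ} (hm : 0 < m) (hω : 0 < ω)
    (hγ : 0 < γ) :
    (fun S => (gammaMeasure m (m / (ω * S)) (Iio γ)).toReal) ~[atTop]
      fun S => 1 / (m * Gamma m) * (m * γ / ω) ^ m * S ^ (-m) := by
  have hrate : Tendsto (fun S : ℝ => m / (ω * S)) atTop (𝓝[≥] 0) := by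
    refine tendsto_nhdsWithin_iff.mpr
      ⟨tendsto_const_nhds.div_atTop (tendsto_id.const_mul_atTop hω), ?_⟩
    filter_upwards [eventually_gt_atTop 0] with S hS
    exact (div_pos hm (mul_pos hω hS)).le
  have hγm : 0 < γ ^ m := rpow_pos_of_pos hγ m
  have hratio :=
    ((tendsto_intervalIntegral_rpow_mul_exp_neg_mul hm hγ.le).comp hrate).const_mul (m / γ ^ m)
  rw [show m / γ ^ m * (γ ^ m / m) = 1 by field_simp] at hratio
  refine isEquivalent_of_tendsto_one (hratio.congr' ?_)
  filter_upwards [eventually_gt_atTop 0] with S hS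
  have hrate_rpow : (m / (ω * S)) ^ m = (m / ω) ^ m * S ^ (-m) := by
    rw [div_mul_eq_div_div, div_rpow (by positivity) hS.le, rpow_neg hS.le, div_eq_mul_inv]
  have hconst_rpow : (m * γ / ω) ^ m = (m / ω) ^ m * γ ^ m := by
    rw [mul_div_right_comm, mul_rpow (by positivity) hγ.le]
  have hΓ := Gamma_pos_of_pos hm
  rw [Pi.div_apply, Function.comp_apply, gammaMeasure_Iio_toReal hm (by positivity) hγ.le,
    hrate_rpow, hconst_rpow]
  field_simp

theorem measure_prod_min_lt_toReal {α : Type*} [LinearOrder α] [TopologicalSpace α]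
    [OrderClosedTopology α] [MeasurableSpace α] [OpensMeasurableSpace α]
    (μ ν : Measure α) [IsProbabilityMeasure μ] [IsProbabilityMeasure ν] (γ : α) :
    ((μ.prod ν) {p : α × α | min p.1 p.2 < γ}).toReal =
      (μ (Iio γ)).toReal + (ν (Iio γ)).toReal - (μ (Iio γ)).toReal * (ν (Iio γ)).toReal := by
  have hset : {p : α × α | min p.1 p.2 < γ} = (Ici γ ×ˢ Ici γ)ᶜ := by
    ext p
    simp only [mem_ofPred_eq, mem_compl_iff, mem_prod, mem_Ici, min_lt_iff, not_and_or, not_le]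
  simp only [← measureReal_def]
  rw [hset, probReal_compl_eq_one_sub (measurableSet_Ici.prod measurableSet_Ici),
    measureReal_prod_prod, ← compl_Iio, probReal_compl_eq_one_sub measurableSet_Iio,
    probReal_compl_eq_one_sub measurableSet_Iio]
  ring

theorem gammaMeasure_prod_min_lt_toReal_isEquivalent {m₁ m₂ ω₁ ω₂ γ : ℝ} (hm₁ : 0 < m₁)
    (hm₂ : 0 < m₂) (hω₁ : 0 < ω₁) (hω₂ : 0 < ω₂) (hγ : 0 < γ) :
    (fun S : ℝ => (((gammaMeasure m₁ (m₁ / (ω₁ * S))).prod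
      (gammaMeasure m₂ (m₂ / (ω₂ * S)))) {p : ℝ × ℝ | min p.1 p.2 < γ}).toReal) ~[atTop]
      fun S => 1 / (m₁ * Gamma m₁) * (m₁ * γ / ω₁) ^ m₁ * S ^ (-m₁) +
        1 / (m₂ * Gamma m₂) * (m₂ * γ / ω₂) ^ m₂ * S ^ (-m₂) := by
  have hnonneg {m ω : ℝ} (hm : 0 < m) (hω : 0 < ω) :
      0 ≤ᶠ[atTop] fun S : ℝ => 1 / (m * Gamma m) * (m * γ / ω) ^ m * S ^ (-m) := by
    have := Gamma_pos_of_pos hm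
    filter_upwards [eventually_gt_atTop 0] with S hS using by positivity
  have hF₁ := gammaMeasure_Iio_toReal_isEquivalent hm₁ hω₁ hγ
  have hF₂ := gammaMeasure_Iio_toReal_isEquivalent hm₂ hω₂ hγ
  have hF₂_tendsto := hF₂.symm.tendsto_nhds
    (by simpa only [mul_zero] using (tendsto_rpow_neg_atTop hm₂).const_mul _)
  refine (hF₁.add_sub_mul hF₂ (hnonneg hm₁ hω₁) (hnonneg hm₂ hω₂) hF₂_tendsto).congr_left ?_
  filter_upwards [eventually_gt_atTop 0] with S hS
  have := isProbabilityMeasure_gammaMeasure hm₁ (div_pos hm₁ (mul_pos hω₁ hS))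
  have := isProbabilityMeasure_gammaMeasure hm₂ (div_pos hm₂ (mul_pos hω₂ hS))
  rw [measure_prod_min_lt_toReal]

/-- Asymptotics of the outage probability of the minimum of two independent
Gamma (Nakagami-`m`) hop SNRs, whose rates scale as `mᵢ / (ωᵢ * SNR)`. -/
theorem min_gamma_outage_asymptotic (m₁ m₂ ω₁ ω₂ γth : ℝ)
    (hm₁ : 0 < m₁) (hm₂ : 0 < m₂) (hω₁ : 0 < ω₁) (hω₂ : 0 < ω₂) (hγth : 0 < γth) :
    (m₁ ≠ m₂ →
      Filter.Tendsto
        (fun SNR : ℝ =>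
          (((gammaMeasure m₁ (m₁ / (ω₁ * SNR))).prod
              (gammaMeasure m₂ (m₂ / (ω₂ * SNR))))
            {p : ℝ × ℝ | min p.1 p.2 < γth}).toReal /
          ((1 / ((min m₁ m₂) * Real.Gamma (min m₁ m₂))) *
            ((min m₁ m₂) * γth / (if m₁ < m₂ then ω₁ else ω₂)) ^ (min m₁ m₂) *
            SNR ^ (-(min m₁ m₂))))
        atTop (nhds 1)) ∧
    (m₁ = m₂ →
      Filter.Tendsto
        (fun SNR : ℝ =>
          (((gammaMeasure m₁ (m₁ / (ω₁ * SNR))).prod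
              (gammaMeasure m₂ (m₂ / (ω₂ * SNR))))
            {p : ℝ × ℝ | min p.1 p.2 < γth}).toReal /
          (((1 / (m₁ * Real.Gamma m₁)) * (m₁ * γth / ω₁) ^ m₁ +
              (1 / (m₂ * Real.Gamma m₂)) * (m₂ * γth / ω₂) ^ m₂) *
            SNR ^ (-(min m₁ m₂))))
        atTop (nhds 1)) := by
  have hout := gammaMeasure_prod_min_lt_toReal_isEquivalent hm₁ hm₂ hω₁ hω₂ hγth
  set C₁ := 1 / (m₁ * Gamma m₁) * (m₁ * γth / ω₁) ^ m₁
  set C₂ := 1 / (m₂ * Gamma m₂) * (m₂ * γth / ω₂) ^ m₂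
  have hC₁ : 0 < C₁ := by have := Gamma_pos_of_pos hm₁; positivity
  have hC₂ : 0 < C₂ := by have := Gamma_pos_of_pos hm₂; positivity
  refine ⟨fun hne => ?_, ?_⟩
  · rcases hne.lt_or_gt with hlt | hlt
    · rw [min_eq_left hlt.le, if_pos hlt]
      refine IsEquivalent.tendsto_div_const_mul_rpow hC₁.ne' ?_
      exact hout.trans (isEquivalent_const_mul_rpow_add_of_lt hC₁.ne' hlt)
    · rw [min_eq_right hlt.le, if_neg hlt.not_gt]
      refine IsEquivalent.tendsto_div_const_mul_rpow hC₂.ne' ?_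
      exact (hout.congr_right (Eventually.of_forall fun S => add_comm _ _)).trans
        (isEquivalent_const_mul_rpow_add_of_lt hC₂.ne' hlt)
  · rintro rfl
    rw [min_self]
    refine IsEquivalent.tendsto_div_const_mul_rpow (add_pos hC₁ hC₂).ne' ?_
    exact hout.congr_right (Eventually.of_forall fun S => (add_mul _ _ _).symm)
end

section
/- In the DF-AF selection scheme with SC, the outage probability equals F_{γ₀}(γ_th) · ∏_{i=1}^K [ (1 − F_{γ_{1i}}(Δ)) F_{γ_{2i}}(γ_th) + F_{γ_{1i}}(Δ) ], assuming γ_th = Δ and all channel SNRs independent with continuous CDFs. -/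
/-!
A relay path is in outage exactly when one of its two hops is: in the DF branch its SNR is the
second-hop SNR, and in the AF branch `γ₁ < Δ` while `γ₁γ₂/(γ₁+γ₂+1) ≤ γ₁`. So outage is the
intersection of `{γ₀ < Δ}` with the events `{γ₁ᵢ < Δ} ∪ {γ₂ᵢ < Δ}`, which depend on disjoint
groups of independent SNRs and hence multiply. Each union has probability `F₁ + F₂ - F₁F₂` by
inclusion–exclusion, and continuity of the CDFs lets `<` be replaced by `≤`.
-/

open MeasureTheory ProbabilityTheory Finset Function

theorem ProbabilityTheory.iIndep.iIndep_biSup {Ω ι κ : Type*} {mΩ : MeasurableSpace Ω}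
    {μ : Measure Ω} {m : ι → MeasurableSpace Ω} (h_le : ∀ i, m i ≤ mΩ) (h_indep : iIndep m μ)
    {S : κ → Set ι} (hS : Pairwise (Disjoint on S)) :
    iIndep (fun k => ⨆ i ∈ S k, m i) μ := by
  classical
  refine (iIndep_iff _ μ).2 fun s f hf => ?_
  induction s using Finset.induction_on with
  | empty => simpa using h_indep.meas_biInter (S := ∅) (s := fun _ => Set.univ) (by simp)
  | @insert a s ha ih =>
    have hrest : MeasurableSet[⨆ i ∈ (S a)ᶜ, m i] (⋂ k ∈ s, f k) := by
      refine .biInter s.countable_toSet fun k hk => ?_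
      have hle : ⨆ i ∈ S k, m i ≤ ⨆ i ∈ (S a)ᶜ, m i :=
        biSup_mono fun i hi => (hS (ne_of_mem_of_not_mem hk ha)).notMem_of_mem_left hi
      exact hle _ (hf k (mem_insert_of_mem hk))
    have h_ind := (indep_iSup_of_disjoint h_le h_indep disjoint_compl_left).indepSet_of_measurableSet
      hrest (hf a (mem_insert_self a s))
    rw [set_biInter_insert, Set.inter_comm, h_ind.measure_inter_eq_mul, prod_insert ha,
      ih fun k hk => hf k (mem_insert_of_mem hk), mul_comm]

theorem measurable_biSup_comap_of_mem {Ω ι β : Type*} [mβ : MeasurableSpace β]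
    {X : ι → Ω → β} {S : Set ι} {j : ι} (hj : j ∈ S) :
    Measurable[⨆ i ∈ S, mβ.comap (X i)] (X j) :=
  (comap_measurable (X j)).mono (le_iSup₂ (f := fun i (_ : i ∈ S) => mβ.comap (X i)) j hj) le_rfl

theorem measureReal_lt_eq_measureReal_le_of_continuous {Ω : Type*} [MeasurableSpace Ω]
    {μ : Measure Ω} [IsProbabilityMeasure μ] {Y : Ω → ℝ} (hY : Measurable Y)
    (hF : Continuous fun t => μ.real {ω | Y ω ≤ t}) (t : ℝ) :
    μ.real {ω | Y ω < t} = μ.real {ω | Y ω ≤ t} := by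
  have := Measure.isProbabilityMeasure_map (μ := μ) hY.aemeasurable
  have hcdf : cdf (μ.map Y) = fun t => μ.real {ω | Y ω ≤ t} := by
    ext s
    rw [cdf_eq_real, map_measureReal_apply hY measurableSet_Iic]
    rfl
  have hcont : Continuous (cdf (μ.map Y)) := hcdf ▸ hF
  have hatom : μ.map Y {t} = 0 := by
    rw [← measure_cdf (μ.map Y), StieltjesFunction.measure_singleton,
      hcont.continuousAt.continuousWithinAt.leftLim_eq, sub_self, ENNReal.ofReal_zero]
  have := measureReal_congr (Iio_ae_eq_Iic' hatom)
  rwa [map_measureReal_apply hY measurableSet_Iio, map_measureReal_apply hY measurableSet_Iic] at this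

theorem ProbabilityTheory.IndepSet.measureReal_union {Ω : Type*} [MeasurableSpace Ω]
    {μ : Measure Ω} [IsFiniteMeasure μ] {A B : Set Ω} (hB : MeasurableSet B)
    (h : IndepSet A B μ) :
    μ.real (A ∪ B) = (1 - μ.real A) * μ.real B + μ.real A := by
  have h_incl_excl := measureReal_union_add_inter (μ := μ) (s := A) hB
  rw [measureReal_def μ (A ∩ B), h.measure_inter_eq_mul, ENNReal.toReal_mul] at h_incl_excl
  simp only [← measureReal_def] at h_incl_excl
  linarith

theorem ProbabilityTheory.IndepFun.measureReal_preimage_union {Ω β γ : Type*}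
    [MeasurableSpace Ω] [MeasurableSpace β] [MeasurableSpace γ] {μ : Measure Ω}
    [IsProbabilityMeasure μ] {Y : Ω → β} {Z : Ω → γ} (hY : Measurable Y) (hZ : Measurable Z)
    (h : IndepFun Y Z μ) {s : Set β} {t : Set γ} (hs : MeasurableSet s) (ht : MeasurableSet t) :
    μ.real (Y ⁻¹' s ∪ Z ⁻¹' t) = (1 - μ.real (Y ⁻¹' s)) * μ.real (Z ⁻¹' t) + μ.real (Y ⁻¹' s) :=
  ((indepSet_iff_measure_inter_eq_mul (hY hs) (hZ ht) μ).2
    (h.measure_inter_preimage_eq_mul _ _ hs ht)).measureReal_union (hZ ht)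

theorem ProbabilityTheory.iIndepFun.measure_preimage_inter_iInter_union {Ω κ β : Type*}
    [MeasurableSpace Ω] [MeasurableSpace β] [Fintype κ] {μ : Measure Ω}
    {X : Unit ⊕ (κ ⊕ κ) → Ω → β} (hmeas : ∀ j, Measurable (X j)) (hindep : iIndepFun X μ)
    {s : Set β} {t u : κ → Set β} (hs : MeasurableSet s) (ht : ∀ i, MeasurableSet (t i))
    (hu : ∀ i, MeasurableSet (u i)) :
    μ (X (.inl ()) ⁻¹' s ∩ ⋂ i, (X (.inr (.inl i)) ⁻¹' t i ∪ X (.inr (.inr i)) ⁻¹' u i)) =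
      μ (X (.inl ()) ⁻¹' s) * ∏ i, μ (X (.inr (.inl i)) ⁻¹' t i ∪ X (.inr (.inr i)) ⁻¹' u i) := by
  let block : Unit ⊕ (κ ⊕ κ) → Unit ⊕ κ := Sum.map id (Sum.elim id id)
  let G : Unit ⊕ κ → Set Ω := Sum.elim (fun _ => X (.inl ()) ⁻¹' s)
    fun i => X (.inr (.inl i)) ⁻¹' t i ∪ X (.inr (.inr i)) ⁻¹' u i
  have hX (k : Unit ⊕ κ) (j) (hj : block j = k) :
      Measurable[⨆ j ∈ block ⁻¹' {k}, MeasurableSpace.comap (X j) inferInstance] (X j) :=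
    measurable_biSup_comap_of_mem hj
  have hG : ∀ k, MeasurableSet[⨆ j ∈ block ⁻¹' {k}, MeasurableSpace.comap (X j) inferInstance]
      (G k) := by
    rintro (_ | i)
    · exact hX _ (.inl ()) rfl hs
    · exact (hX _ (.inr (.inl i)) rfl (ht i)).union (hX _ (.inr (.inr i)) rfl (hu i))
  have h_inter := (hindep.iIndep.iIndep_biSup (fun j => (hmeas j).comap_le)
    (pairwise_disjoint_fiber block)).meas_iInter hG
  simpa [G, Set.iInter_sum, Set.iInter_const, Fintype.prod_sum_type] using h_inter

/-- Decode-and-forward when the first hop clears `Δ`, amplify-and-forward otherwise. -/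
noncomputable def dfafRelaySNR (Δ x₁ x₂ : ℝ) : ℝ :=
  if Δ ≤ x₁ then x₂ else x₁ * x₂ / (x₁ + x₂ + 1)

theorem dfafRelaySNR_lt_iff {Δ x₁ x₂ : ℝ} (hx₁ : 0 ≤ x₁) (hx₂ : 0 ≤ x₂) :
    dfafRelaySNR Δ x₁ x₂ < Δ ↔ x₁ < Δ ∨ x₂ < Δ := by
  unfold dfafRelaySNR
  split_ifs with hdf
  · exact ⟨Or.inr, fun h => h.resolve_left hdf.not_gt⟩
  · have haf : x₁ * x₂ / (x₁ + x₂ + 1) ≤ x₁ := by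
      rw [div_le_iff₀ (by positivity)]
      nlinarith
    exact iff_of_true (haf.trans_lt (not_le.1 hdf)) (Or.inl (not_le.1 hdf))

theorem dfaf_sc_outage_formula_general {Ω : Type*} [MeasurableSpace Ω] (μ : Measure Ω)
    [IsProbabilityMeasure μ] (K : ℕ)
    (X : Unit ⊕ (Fin K ⊕ Fin K) → Ω → ℝ)
    (hmeas : ∀ j, Measurable (X j))
    (hnn : ∀ j ω, 0 ≤ X j ω)
    (hindep : iIndepFun X μ)
    (hcont : ∀ j, Continuous (fun t : ℝ => (μ {ω | X j ω ≤ t}).toReal))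
    (Δ γth : ℝ) (hγthΔ : γth = Δ) :
    (μ {ω | X (Sum.inl ()) ω < γth ∧ ∀ i : Fin K,
        (if Δ ≤ X (Sum.inr (Sum.inl i)) ω then X (Sum.inr (Sum.inr i)) ω
         else X (Sum.inr (Sum.inl i)) ω * X (Sum.inr (Sum.inr i)) ω /
           (X (Sum.inr (Sum.inl i)) ω + X (Sum.inr (Sum.inr i)) ω + 1)) < γth}).toReal =
      (μ {ω | X (Sum.inl ()) ω ≤ γth}).toReal *
        ∏ i : Fin K,
          ((1 - (μ {ω | X (Sum.inr (Sum.inl i)) ω ≤ Δ}).toReal) *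
              (μ {ω | X (Sum.inr (Sum.inr i)) ω ≤ γth}).toReal +
            (μ {ω | X (Sum.inr (Sum.inl i)) ω ≤ Δ}).toReal) := by
  subst hγthΔ
  have hlt (j) : μ.real (X j ⁻¹' Set.Iio γth) = μ.real {ω | X j ω ≤ γth} :=
    measureReal_lt_eq_measureReal_le_of_continuous (hmeas j) (hcont j) γth
  have hout : {ω | X (.inl ()) ω < γth ∧ ∀ i : Fin K,
      dfafRelaySNR γth (X (.inr (.inl i)) ω) (X (.inr (.inr i)) ω) < γth} =
      X (.inl ()) ⁻¹' Set.Iio γth ∩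
        ⋂ i, (X (.inr (.inl i)) ⁻¹' Set.Iio γth ∪ X (.inr (.inr i)) ⁻¹' Set.Iio γth) := by
    ext ω
    simp [dfafRelaySNR_lt_iff, hnn]
  change μ.real {ω | _ ∧ ∀ i : Fin K, dfafRelaySNR _ _ _ < _} = _
  rw [hout, measureReal_def, hindep.measure_preimage_inter_iInter_union hmeas measurableSet_Iio
    (fun _ => measurableSet_Iio) (fun _ => measurableSet_Iio), ENNReal.toReal_mul,
    ENNReal.toReal_prod]
  simp only [← measureReal_def, ← hlt]
  congr 1
  refine Finset.prod_congr rfl fun i _ => ?_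
  exact (hindep.indepFun (by simp)).measureReal_preimage_union (hmeas _) (hmeas _)
    measurableSet_Iio measurableSet_Iio

/-- Outage probability of opportunistic DF-AF selection relaying with
selection combining, with `γ_th = Δ`. The index `Sum.inl ()` is the direct
link SNR `γ₀`; `Sum.inr (Sum.inl i)` is the first-hop SNR `γ_{1i}` and
`Sum.inr (Sum.inr i)` the second-hop SNR `γ_{2i}`. -/
theorem dfaf_sc_outage_formula {Ω : Type*} [MeasurableSpace Ω] (μ : Measure Ω)
    [IsProbabilityMeasure μ] (K : ℕ)
    (X : Unit ⊕ (Fin K ⊕ Fin K) → Ω → ℝ)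
    (hmeas : ∀ j, Measurable (X j))
    (hnn : ∀ j ω, 0 ≤ X j ω)
    (hindep : iIndepFun X μ)
    (hcont : ∀ j, Continuous (fun t : ℝ => (μ {ω | X j ω ≤ t}).toReal))
    (Δ γth : ℝ) (hΔ : 0 < Δ) (hγthΔ : γth = Δ) :
    (μ {ω | X (Sum.inl ()) ω < γth ∧ ∀ i : Fin K,
        (if Δ ≤ X (Sum.inr (Sum.inl i)) ω then X (Sum.inr (Sum.inr i)) ω
         else X (Sum.inr (Sum.inl i)) ω * X (Sum.inr (Sum.inr i)) ω /
           (X (Sum.inr (Sum.inl i)) ω + X (Sum.inr (Sum.inr i)) ω + 1)) < γth}).toReal =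
      (μ {ω | X (Sum.inl ()) ω ≤ γth}).toReal *
        ∏ i : Fin K,
          ((1 - (μ {ω | X (Sum.inr (Sum.inl i)) ω ≤ Δ}).toReal) *
              (μ {ω | X (Sum.inr (Sum.inr i)) ω ≤ γth}).toReal +
            (μ {ω | X (Sum.inr (Sum.inl i)) ω ≤ Δ}).toReal) :=
  dfaf_sc_outage_formula_general μ K X hmeas hnn hindep hcont Δ γth hγthΔ
end
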